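/- Let α ∈ (0,1). For every integer x ≥ 1 the drift of the birth-and-death toy model at site x+1 is strictly negative: (x+1)^α < x^α · exp((x+1)^α - x^α). Moreover there exists a constant k ≥ 1, depending only on α, such that for every integer x ≥ 1: (1/k) · x^{2α-1} ≤ x^α · exp((x+1)^α - x^α) - (x+1)^α ≤ k · x^{2α-1}. -/

import Mathlib

/-!
Write `A = x^α` and `δ = (x+1)^α - x^α`, so that the quantity to estimate is `A (e^δ - 1) - δ`.
The tangent-line inequality for the concave map `t ↦ t^α` gives `δ ≍ x^(α-1)`, and the
exponential series traps `A (e^δ - 1) - δ` between `(A - 1) δ + A δ² / 2` and `2 A δ`.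
In the lower bound the linear term carries the estimate for large `x` and the quadratic
term near `x = 1`, where `A - 1` vanishes.
-/

open Real

theorem rpow_sub_rpow_le_mul_rpow_sub_one_mul {p x y : ℝ} (hp₀ : 0 ≤ p) (hp₁ : p ≤ 1)
    (hx : 0 < x) (hy : 0 ≤ y) : y ^ p - x ^ p ≤ p * x ^ (p - 1) * (y - x) := by
  have hbern : (1 + (y / x - 1)) ^ p ≤ 1 + p * (y / x - 1) :=
    rpow_one_add_le_one_add_mul_self (by linarith [div_nonneg hy hx.le]) hp₀ hp₁
  have hsplit : y ^ p = x ^ p * (1 + (y / x - 1)) ^ p := by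
    rw [add_sub_cancel, ← mul_rpow hx.le (div_nonneg hy hx.le), mul_div_cancel₀ y hx.ne']
  have htangent : x ^ p * (1 + p * (y / x - 1)) = x ^ p + p * x ^ (p - 1) * (y - x) := by
    rw [rpow_sub_one hx.ne']; field_simp
  calc y ^ p - x ^ p ≤ x ^ p * (1 + p * (y / x - 1)) - x ^ p := by
        rw [hsplit]; gcongr
    _ = p * x ^ (p - 1) * (y - x) := by rw [htangent]; ring

theorem sub_one_mul_add_le_mul_exp_sub {A δ : ℝ} (hA : 0 ≤ A) (hδ : 0 ≤ δ) :
    (A - 1) * δ + A * δ ^ 2 / 2 ≤ A * exp δ - (A + δ) := by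
  nlinarith [quadratic_le_exp_of_nonneg hδ]

theorem mul_exp_sub_le {A δ : ℝ} (hA : 0 ≤ A) (hδ₀ : 0 ≤ δ) (hδ₁ : δ ≤ 1) :
    A * exp δ - (A + δ) ≤ 2 * A * δ := by
  have h := abs_exp_sub_one_le (x := δ) (by rwa [abs_of_nonneg hδ₀])
  rw [abs_of_nonneg hδ₀] at h
  nlinarith [(abs_le.mp h).2]

theorem rpow_add_one_sub_rpow_le {α t : ℝ} (hα₀ : 0 ≤ α) (hα₁ : α ≤ 1) (ht : 0 < t) :
    (t + 1) ^ α - t ^ α ≤ α * t ^ (α - 1) := by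
  simpa using rpow_sub_rpow_le_mul_rpow_sub_one_mul hα₀ hα₁ ht (by linarith : 0 ≤ t + 1)

theorem half_mul_rpow_sub_one_le_rpow_add_one_sub_rpow {α t : ℝ} (hα₀ : 0 ≤ α) (hα₁ : α ≤ 1)
    (ht : 1 ≤ t) : α / 2 * t ^ (α - 1) ≤ (t + 1) ^ α - t ^ α := by
  have ht₀ : 0 < t := by linarith
  have hconc := rpow_sub_rpow_le_mul_rpow_sub_one_mul hα₀ hα₁ (by linarith : 0 < t + 1) ht₀.le
  have hbase : (2 : ℝ)⁻¹ ≤ 2 ^ (α - 1) := by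
    rw [← rpow_neg_one]; exact rpow_le_rpow_of_exponent_le one_le_two (by linarith)
  have hmono : 2 ^ (α - 1) * t ^ (α - 1) ≤ (t + 1) ^ (α - 1) := by
    rw [← mul_rpow zero_le_two ht₀.le]
    exact rpow_le_rpow_of_nonpos (by linarith) (by linarith) (by linarith)
  calc α / 2 * t ^ (α - 1) ≤ α * (2 ^ (α - 1) * t ^ (α - 1)) := by
        rw [div_eq_mul_inv, mul_assoc]; gcongr
    _ ≤ α * (t + 1) ^ (α - 1) := by gcongr
    _ ≤ (t + 1) ^ α - t ^ α := by linarith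

theorem mul_rpow_sub_rpow_sub_one_le_rpow_sub_one {α t : ℝ} (hα₀ : 0 ≤ α) (hα₁ : α ≤ 1)
    (ht : 0 < t) : α * (t ^ α - t ^ (α - 1)) ≤ t ^ α - 1 := by
  have hconc := rpow_sub_rpow_le_mul_rpow_sub_one_mul hα₀ hα₁ ht zero_le_one
  rw [one_rpow] at hconc
  have : t ^ (α - 1) * t = t ^ α := by rw [rpow_sub_one ht.ne']; field_simp
  nlinarith

theorem sq_div_eight_mul_rpow_le_rpow_mul_exp_sub {α t : ℝ} (hα₀ : 0 ≤ α) (hα₁ : α ≤ 1)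
    (ht : 1 ≤ t) :
    α ^ 2 / 8 * t ^ (2 * α - 1) ≤ t ^ α * exp ((t + 1) ^ α - t ^ α) - (t + 1) ^ α := by
  have ht₀ : 0 < t := by linarith
  have hsplit : t ^ (2 * α - 1) = t ^ α * t ^ (α - 1) := by
    rw [← rpow_add ht₀]; ring_nf
  have hA : 1 ≤ t ^ α := one_le_rpow ht hα₀
  have hr : 0 ≤ t ^ (α - 1) := rpow_nonneg ht₀.le _
  have hrA : t ^ (α - 1) ≤ t ^ α := rpow_le_rpow_of_exponent_le ht (by linarith)
  have hδ := half_mul_rpow_sub_one_le_rpow_add_one_sub_rpow hα₀ hα₁ ht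
  have hA₁ := mul_rpow_sub_rpow_sub_one_le_rpow_sub_one hα₀ hα₁ ht₀
  have hexp := sub_one_mul_add_le_mul_exp_sub (zero_le_one.trans hA)
    ((by positivity : 0 ≤ α / 2 * t ^ (α - 1)).trans hδ)
  rw [add_sub_cancel] at hexp
  rw [hsplit]
  set A := t ^ α
  set r := t ^ (α - 1)
  set δ := (t + 1) ^ α - A
  have hlin : α * (A - r) * (α / 2 * r) ≤ (A - 1) * δ :=
    mul_le_mul hA₁ hδ (by positivity) (by linarith)
  have hquad : A * (α / 2 * r) ^ 2 / 2 ≤ A * δ ^ 2 / 2 := by gcongr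
  have hslack : 0 ≤ α ^ 2 / 8 * r * (3 * (A - r) + r * (A - 1)) := by
    have : 0 ≤ A - r := by linarith
    have : 0 ≤ A - 1 := by linarith
    positivity
  nlinarith

theorem rpow_mul_exp_sub_le_two_mul_rpow {α t : ℝ} (hα₀ : 0 ≤ α) (hα₁ : α ≤ 1) (ht : 1 ≤ t) :
    t ^ α * exp ((t + 1) ^ α - t ^ α) - (t + 1) ^ α ≤ 2 * α * t ^ (2 * α - 1) := by
  have ht₀ : 0 < t := by linarith
  have hsplit : t ^ (2 * α - 1) = t ^ α * t ^ (α - 1) := by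
    rw [← rpow_add ht₀]; ring_nf
  have hA : 0 ≤ t ^ α := rpow_nonneg ht₀.le _
  have hr₀ : 0 ≤ t ^ (α - 1) := rpow_nonneg ht₀.le _
  have hr₁ : t ^ (α - 1) ≤ 1 := rpow_le_one_of_one_le_of_nonpos ht (by linarith)
  have hδ₀ := half_mul_rpow_sub_one_le_rpow_add_one_sub_rpow hα₀ hα₁ ht
  have hδ₁ := rpow_add_one_sub_rpow_le hα₀ hα₁ ht₀
  have hexp := mul_exp_sub_le hA ((by positivity : 0 ≤ α / 2 * t ^ (α - 1)).trans hδ₀)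
    (hδ₁.trans (by nlinarith))
  rw [add_sub_cancel] at hexp
  calc _ ≤ 2 * t ^ α * ((t + 1) ^ α - t ^ α) := hexp
    _ ≤ 2 * t ^ α * (α * t ^ (α - 1)) := by gcongr
    _ = 2 * α * t ^ (2 * α - 1) := by rw [hsplit]; ring

/-- For `α ∈ (0,1)`: the drift at `x+1` is strictly negative for every
integer `x ≥ 1`, i.e. `(x+1)^α < x^α exp((x+1)^α - x^α)`, and there is
`k ≥ 1` (depending only on `α`) such that for every integer `x ≥ 1`,
`(1/k) x^{2α-1} ≤ x^α exp((x+1)^α - x^α) - (x+1)^α ≤ k x^{2α-1}`. -/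
theorem toy_model_negative_drift (α : ℝ) (hα : α ∈ Set.Ioo (0 : ℝ) 1) :
    (∀ x : ℕ, 1 ≤ x →
      ((x : ℝ) + 1) ^ α < (x : ℝ) ^ α * Real.exp (((x : ℝ) + 1) ^ α - (x : ℝ) ^ α)) ∧
    ∃ k : ℝ, 1 ≤ k ∧ ∀ x : ℕ, 1 ≤ x →
      (1 / k) * (x : ℝ) ^ (2 * α - 1) ≤
        (x : ℝ) ^ α * Real.exp (((x : ℝ) + 1) ^ α - (x : ℝ) ^ α) - ((x : ℝ) + 1) ^ α ∧
      (x : ℝ) ^ α * Real.exp (((x : ℝ) + 1) ^ α - (x : ℝ) ^ α) - ((x : ℝ) + 1) ^ α ≤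
        k * (x : ℝ) ^ (2 * α - 1) := by
  obtain ⟨hα₀, hα₁⟩ := hα
  have hsq : α ^ 2 ≤ 1 := by nlinarith
  refine ⟨fun x hx => ?_, 8 / α ^ 2, by rw [le_div_iff₀ (by positivity)]; linarith,
    fun x hx => ?_⟩
  all_goals have hx : (1 : ℝ) ≤ x := by exact_mod_cast hx
  · have hlower := sq_div_eight_mul_rpow_le_rpow_mul_exp_sub hα₀.le hα₁.le hx
    have : 0 < α ^ 2 / 8 * (x : ℝ) ^ (2 * α - 1) := by positivity
    linarith
  · have hpow : 0 ≤ (x : ℝ) ^ (2 * α - 1) := by positivity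
    have hk : 2 * α ≤ 8 / α ^ 2 := by rw [le_div_iff₀ (by positivity)]; nlinarith
    refine ⟨by simpa using sq_div_eight_mul_rpow_le_rpow_mul_exp_sub hα₀.le hα₁.le hx, ?_⟩
    calc _ ≤ 2 * α * (x : ℝ) ^ (2 * α - 1) := rpow_mul_exp_sub_le_two_mul_rpow hα₀.le hα₁.le hx
      _ ≤ _ := by gcongr
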